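/- arXiv:1503.05908 — 4 statements merged into one kernel-verified Lean document; each statement's English description precedes it below -/
import Mathlib

section
/- In an extreme even individual purpose game with cost set C containing c_1 = 0 and c_K = g (the universal goal threshold), for any agent i, any goal j ≠ i, and any strategy in which agent i contributes more than 0 to goal j, the modified strategy contributing 0 to goal j (all other contributions unchanged) yields strictly greater utility for agent i against every profile of other agents' contributions. -/
open Finset

/-- Heaviside step: `Θ x = 1` if `x ≥ 0`, else `0`. -/
noncomputable def theta (x : ℝ) : ℝ := if 0 ≤ x then 1 else 0

/-- Utility of agent `i` in a multi-goal achievement game with motivation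
matrix `w`, goal thresholds `g` and contribution matrix `D`:
`u_i(D) = -Σ_j d_{ij} + Σ_j w_{ij}·Θ(Σ_k d_{kj} - g_j)`. -/
noncomputable def util {N M : ℕ} (w : Fin N → Fin M → ℝ) (g : Fin M → ℝ)
    (D : Fin N → Fin M → ℝ) (i : Fin N) : ℝ :=
  -(∑ j, D i j) + ∑ j, w i j * theta ((∑ k, D k j) - g j)

/-- In an extreme even individual purpose game (N agents, N goals, common
threshold `g`, cost set `C` with least element `0`, second-least element `c₂`
and greatest element `g`; `w i i > g`, and `0 ≤ w i j < c₂ - 0` for `i ≠ j`),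
dropping a positive contribution of agent `i` to a goal `j ≠ i` down to `0`
strictly increases agent `i`'s utility, whatever the other agents do. -/
theorem drop_foreign_contribution {N : ℕ} (C : Set ℝ) (g c₂ : ℝ)
    (hg : 0 < g) (h0C : (0:ℝ) ∈ C) (hgC : g ∈ C) (hc₂ : 0 < c₂)
    (hCrange : ∀ x ∈ C, 0 ≤ x ∧ x ≤ g)
    (hCmin : ∀ x ∈ C, x = 0 ∨ c₂ ≤ x)
    (w : Fin N → Fin N → ℝ)
    (hwii : ∀ i, g < w i i)
    (hwij : ∀ i j, i ≠ j → 0 ≤ w i j ∧ w i j < c₂)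
    (D : Fin N → Fin N → ℝ) (hD : ∀ k l, D k l ∈ C)
    (i j : Fin N) (hij : j ≠ i) (hpos : 0 < D i j) :
    util w (fun _ => g) D i <
      util w (fun _ => g) (fun k l => if k = i ∧ l = j then 0 else D k l) i := by
  classical
  have hji : i ≠ j := fun h => hij h.symm
  have h1 := (hwij i j hji).2
  have hDij : c₂ ≤ D i j := by
    rcases hCmin _ (hD i j) with h | h
    · linarith
    · exact h
  have hrow : (∑ x, if x = j then (0:ℝ) else D i x) = (∑ l, D i l) - D i j := by
    have e : ∀ x : Fin N, (if x = j then (0:ℝ) else D i x)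
        = D i x - (if x = j then D i j else 0) := by
      intro x; by_cases h : x = j <;> simp [h]
    simp only [e, Finset.sum_sub_distrib,
      Finset.sum_ite_eq' Finset.univ j (fun _ => D i j)]
    simp
  have hcol : ∀ x : Fin N,
      (∑ k, if k = i ∧ x = j then (0:ℝ) else D k x)
        = (∑ k, D k x) - (if x = j then D i j else 0) := by
    intro x
    by_cases h : x = j
    · simp only [h, and_true, if_pos rfl]
      have e : ∀ k : Fin N, (if k = i then (0:ℝ) else D k j)
          = D k j - (if k = i then D i j else 0) := by
        intro k; by_cases hk : k = i <;> simp [hk]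
      simp only [e, Finset.sum_sub_distrib,
        Finset.sum_ite_eq' Finset.univ i (fun _ => D i j)]
      simp
    · simp [h]
  unfold util
  simp only [eq_self_iff_true, true_and, hcol, hrow]
  have hsplit1 : (∑ x, w i x * theta ((∑ k, D k x) - g))
      = (∑ x ∈ Finset.univ.erase j, w i x * theta ((∑ k, D k x) - g))
        + w i j * theta ((∑ k, D k j) - g) :=
    (Finset.sum_erase_add _ _ (Finset.mem_univ j)).symm
  have hsplit2 : (∑ x, w i x * theta (((∑ k, D k x) - (if x = j then D i j else 0)) - g))
      = (∑ x ∈ Finset.univ.erase j, w i x * theta ((∑ k, D k x) - g))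
        + w i j * theta ((∑ k, D k j) - D i j - g) := by
    rw [← Finset.sum_erase_add _ _ (Finset.mem_univ j)]
    congr 1
    · exact Finset.sum_congr rfl fun x hx => by
        simp [Finset.ne_of_mem_erase hx]
    · simp
  rw [hsplit1, hsplit2]
  unfold theta
  split_ifs <;> linarith
end

section
/- Importance of being different theorem: an extreme even individual purpose game with N agents, N goals, common goal threshold g, and cost set C with min C = 0 and max C = g has exactly one pure-strategy Nash equilibrium, namely the profile D* with d*_{ij} = g if i = j and d*_{ij} = 0 if i ≠ j; moreover at D* every goal is achieved. -/
open Finset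

/-- `D` is a pure-strategy Nash equilibrium of the `N`-agent, `N`-goal
achievement game with cost set `C`, motivation matrix `w` and common goal
threshold `g`: all contributions lie in `C`, and no agent can strictly
increase its utility by unilaterally changing its own row to another row with
entries in `C`. -/
noncomputable def IsNash {N : ℕ} (C : Set ℝ) (w : Fin N → Fin N → ℝ) (g : ℝ)
    (D : Fin N → Fin N → ℝ) : Prop :=
  (∀ k l, D k l ∈ C) ∧
  ∀ i : Fin N, ∀ r : Fin N → ℝ, (∀ j, r j ∈ C) →
    util w (fun _ => g) (Function.update D i r) i ≤ util w (fun _ => g) D i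

lemma theta_nonneg (x : ℝ) : 0 ≤ theta x := by unfold theta; split <;> norm_num
lemma theta_le_one (x : ℝ) : theta x ≤ 1 := by unfold theta; split <;> norm_num
lemma theta_of_nonneg {x : ℝ} (h : 0 ≤ x) : theta x = 1 := if_pos h
lemma theta_of_neg {x : ℝ} (h : x < 0) : theta x = 0 := if_neg (not_le.mpr h)

lemma sum_update_vec {N : ℕ} (f : Fin N → ℝ) (j : Fin N) (v : ℝ) :
    ∑ k, Function.update f j v k = (∑ k, f k) - f j + v := by
  have h : ∀ k : Fin N, Function.update f j v k = f k + (if k = j then v - f j else 0) := by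
    intro k; rcases eq_or_ne k j with rfl | hk
    · simp
    · simp [Function.update_of_ne hk, hk]
  simp_rw [h, Finset.sum_add_distrib, Finset.sum_ite_eq' Finset.univ j]
  simp; ring

lemma colsum_update {N : ℕ} (D : Fin N → Fin N → ℝ) (i : Fin N) (r : Fin N → ℝ) (j : Fin N) :
    ∑ k, Function.update D i r k j = (∑ k, D k j) - D i j + r j := by
  have h : ∀ k : Fin N, Function.update D i r k j
      = D k j + (if k = i then r j - D i j else 0) := by
    intro k; rcases eq_or_ne k i with rfl | hk
    · simp
    · simp [Function.update_of_ne hk, hk]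
  simp_rw [h, Finset.sum_add_distrib, Finset.sum_ite_eq' Finset.univ i]
  simp; ring

lemma util_update {N : ℕ} (w : Fin N → Fin N → ℝ) (g : ℝ) (D : Fin N → Fin N → ℝ)
    (i : Fin N) (r : Fin N → ℝ) :
    util w (fun _ => g) (Function.update D i r) i
      = -(∑ j, r j) + ∑ j, w i j * theta ((∑ k, D k j) - D i j + r j - g) := by
  unfold util
  simp only [colsum_update, Function.update_self]

lemma util_update_single {N : ℕ} (w : Fin N → Fin N → ℝ) (g : ℝ) (D : Fin N → Fin N → ℝ)
    (i j : Fin N) (v : ℝ) :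
    util w (fun _ => g) (Function.update D i (Function.update (D i) j v)) i
      = util w (fun _ => g) D i + (D i j - v)
        + w i j * (theta ((∑ k, D k j) - D i j + v - g) - theta ((∑ k, D k j) - g)) := by
  rw [util_update]
  have h1 : ∑ j', Function.update (D i) j v j' = (∑ j', D i j') - D i j + v :=
    sum_update_vec _ _ _
  have hpt : ∀ j' : Fin N,
      w i j' * theta ((∑ k, D k j') - D i j' + Function.update (D i) j v j' - g)
        = w i j' * theta ((∑ k, D k j') - g)
          + (if j' = j then
              w i j * theta ((∑ k, D k j) - D i j + v - g)
                - w i j * theta ((∑ k, D k j) - g) else 0) := by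
    intro j'; rcases eq_or_ne j' j with rfl | h
    · simp only [Function.update_self, eq_self_iff_true, if_true]; ring
    · have harg : (∑ k, D k j') - D i j' + D i j' - g = (∑ k, D k j') - g := by ring
      simp only [Function.update_of_ne h, if_neg h, harg, add_zero]
  simp_rw [h1, hpt, Finset.sum_add_distrib, Finset.sum_ite_eq' Finset.univ j]
  simp only [Finset.mem_univ, if_pos]
  unfold util
  ring

/-- **Importance of being different theorem.** An extreme even individual
purpose game with `N` agents, `N` goals, common goal threshold `g > 0`, and
cost set `C` with `min C = 0`, second-lowest cost `c₂` and `max C = g`, where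
`w i i > g` for all `i` and `0 ≤ w i j < c₂` for `i ≠ j`, has exactly one
pure-strategy Nash equilibrium, namely `D* i j = g` if `i = j` and `0`
otherwise; moreover at `D*` every goal is achieved. -/
theorem importance_of_being_different {N : ℕ} (C : Set ℝ) (g c₂ : ℝ)
    (hg : 0 < g) (h0C : (0:ℝ) ∈ C) (hgC : g ∈ C) (hc₂ : 0 < c₂)
    (hCrange : ∀ x ∈ C, 0 ≤ x ∧ x ≤ g)
    (hCmin : ∀ x ∈ C, x = 0 ∨ c₂ ≤ x)
    (w : Fin N → Fin N → ℝ)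
    (hwii : ∀ i, g < w i i)
    (hwij : ∀ i j, i ≠ j → 0 ≤ w i j ∧ w i j < c₂) :
    IsNash C w g (fun i j => if i = j then g else 0) ∧
    (∀ j : Fin N, g ≤ ∑ k, (fun i j => if i = j then g else (0:ℝ)) k j) ∧
    (∀ D : Fin N → Fin N → ℝ, IsNash C w g D →
      D = fun i j => if i = j then g else 0) := by
  have hcol : ∀ j : Fin N, (∑ k : Fin N, (if k = j then g else (0:ℝ))) = g := by
    intro j
    rw [Finset.sum_ite_eq' Finset.univ j (fun _ => g)]
    simp
  refine ⟨⟨fun k l => ?_, fun i r hr => ?_⟩, fun j => ?_, fun D hD => ?_⟩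
  · dsimp only; split_ifs <;> assumption
  · -- D* is a best response
    rw [util_update]
    have hustar : util w (fun _ => g) (fun i j => if i = j then g else 0) i
        = -g + ∑ j, w i j := by
      unfold util
      simp only [hcol]
      rw [Finset.sum_ite_eq Finset.univ i (fun _ => g)]
      simp [theta]
    rw [hustar]
    simp only [hcol]
    have hsplit : ∀ f : Fin N → ℝ,
        ∑ j, f j = f i + ∑ j ∈ Finset.univ.erase i, f j :=
      fun f => (Finset.add_sum_erase _ f (Finset.mem_univ i)).symm
    rw [hsplit (fun j => w i j * theta (g - (if i = j then g else 0) + r j - g)),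
        hsplit (fun j => w i j), hsplit r]
    have herase : ∑ j ∈ Finset.univ.erase i,
          w i j * theta (g - (if i = j then g else 0) + r j - g)
        = ∑ j ∈ Finset.univ.erase i, w i j := by
      refine Finset.sum_congr rfl fun j hj => ?_
      have hj' : i ≠ j := (Finset.ne_of_mem_erase hj).symm
      have harg : g - (if i = j then g else 0) + r j - g = r j := by
        rw [if_neg hj']; ring
      rw [harg, theta_of_nonneg (hCrange _ (hr j)).1, mul_one]
    rw [herase]
    have harg2 : g - (if i = i then g else 0) + r i - g = r i - g := by
      rw [if_pos rfl]; ring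
    rw [harg2]
    have hri := hCrange _ (hr i)
    have hsum : 0 ≤ ∑ j ∈ Finset.univ.erase i, r j :=
      Finset.sum_nonneg fun j _ => (hCrange _ (hr j)).1
    by_cases h : (0:ℝ) ≤ r i - g
    · rw [theta_of_nonneg h]
      have : r i = g := le_antisymm hri.2 (by linarith)
      linarith
    · rw [theta_of_neg (not_le.1 h)]
      have := hwii i
      linarith [hri.1]
  · -- all goals achieved at D*
    simp only
    rw [hcol j]
  · -- uniqueness
    obtain ⟨hmem, hbr⟩ := hD
    have hoff : ∀ i j : Fin N, i ≠ j → D i j = 0 := by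
      intro i j hij
      by_contra hne
      have hc : c₂ ≤ D i j := (hCmin _ (hmem i j)).resolve_left hne
      have hrmem : ∀ j', Function.update (D i) j 0 j' ∈ C := by
        intro j'; rcases eq_or_ne j' j with rfl | h
        · simpa using h0C
        · simpa [Function.update_of_ne h] using hmem i j'
      have hle := hbr i _ hrmem
      rw [util_update_single w g D i j 0] at hle
      have hθ1 := theta_nonneg ((∑ k, D k j) - D i j + 0 - g)
      have hθ2 := theta_le_one ((∑ k, D k j) - g)
      have hw := hwij i j hij
      have e1 := mul_nonneg hw.1 hθ1
      have e2 := mul_nonneg hw.1 (sub_nonneg.2 hθ2)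
      nlinarith [hw.2]
    have hScol : ∀ j : Fin N, (∑ k, D k j) = D j j := by
      intro j
      rw [← Finset.add_sum_erase _ _ (Finset.mem_univ j)]
      rw [Finset.sum_eq_zero fun k hk => hoff k j (Finset.ne_of_mem_erase hk)]
      ring
    have hdiag : ∀ i : Fin N, D i i = g := by
      intro i
      have hri := hCrange _ (hmem i i)
      rcases eq_or_lt_of_le hri.2 with h | h
      · exact h
      exfalso
      have hrmem : ∀ j', Function.update (D i) i g j' ∈ C := by
        intro j'; rcases eq_or_ne j' i with rfl | hne
        · simpa using hgC
        · simpa [Function.update_of_ne hne] using hmem i j'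
      have hle := hbr i _ hrmem
      rw [util_update_single w g D i i g, hScol i] at hle
      have h1 : theta (D i i - D i i + g - g) = 1 := by
        rw [show D i i - D i i + g - g = 0 by ring]
        exact theta_of_nonneg le_rfl
      have h2 : theta (D i i - g) = 0 := theta_of_neg (by linarith)
      rw [h1, h2] at hle
      have := hwii i
      linarith [hri.1]
    funext i j
    rcases eq_or_ne i j with rfl | h
    · simp [hdiag i]
    · simp [h, hoff i j h]
end

section
/- Uniqueness of the maximizing row: in an extreme even individual purpose game with cost set C, c_1 = 0, c_K = g, suppose every agent k ≠ i plays d_{kj} = g·[k = j]. Then the row r* = (g·[j = i])_j is agent i's unique best response: for every other row r ∈ C^N with r ≠ r*, u_i(r) < u_i(r*). -/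
open Finset

/-- Uniqueness of the maximizing row: in an extreme even individual purpose
game, if every agent `k ≠ i` plays `d_{kj} = g·[k = j]`, then the row
`r* j = g·[j = i]` is agent `i`'s unique best response: every other row with
entries in the cost set `C` yields strictly smaller utility for agent `i`. -/
theorem unique_best_response {N : ℕ} (C : Set ℝ) (g c₂ : ℝ)
    (hg : 0 < g) (h0C : (0:ℝ) ∈ C) (hgC : g ∈ C) (hc₂ : 0 < c₂)
    (hCrange : ∀ x ∈ C, 0 ≤ x ∧ x ≤ g)
    (hCmin : ∀ x ∈ C, x = 0 ∨ c₂ ≤ x)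
    (w : Fin N → Fin N → ℝ)
    (hwii : ∀ i, g < w i i)
    (hwij : ∀ i j, i ≠ j → 0 ≤ w i j ∧ w i j < c₂)
    (i : Fin N) :
    ∀ r : Fin N → ℝ, (∀ j, r j ∈ C) → r ≠ (fun j => if j = i then g else 0) →
      util w (fun _ => g)
          (Function.update (fun k j => if k = j then g else (0:ℝ)) i r) i <
        util w (fun _ => g)
          (Function.update (fun k j => if k = j then g else (0:ℝ)) i
            (fun j => if j = i then g else 0)) i := by
  intro r hrC hrne
  have hr0 : ∀ j, 0 ≤ r j := fun j => (hCrange _ (hrC j)).1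
  have hrg : ∀ j, r j ≤ g := fun j => (hCrange _ (hrC j)).2
  -- column sums
  have hD : ∀ s : Fin N → ℝ, ∀ j,
      (∑ k, Function.update (fun k j => if k = j then (g:ℝ) else 0) i s k j)
      = s j + (if j = i then 0 else g) := by
    intro s j
    rw [← Finset.add_sum_erase Finset.univ _ (Finset.mem_univ i)]
    have h1 : Function.update (fun k j => if k = j then (g:ℝ) else 0) i s i j = s j := by
      simp [Function.update]
    rw [h1]
    congr 1
    have h2 : ∀ k ∈ Finset.univ.erase i,
        Function.update (fun k j => if k = j then (g:ℝ) else 0) i s k j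
        = if k = j then g else 0 := by
      intro k hk
      have : k ≠ i := (Finset.mem_erase.1 hk).1
      simp [Function.update, this]
    rw [Finset.sum_congr rfl h2, Finset.sum_ite_eq' _ j (fun _ => (g:ℝ))]
    by_cases hji : j = i <;> simp [hji]
  -- util formula
  have huti : ∀ s : Fin N → ℝ, (∀ j, 0 ≤ s j) →
      util w (fun _ => g) (Function.update (fun k j => if k = j then (g:ℝ) else 0) i s) i
      = -(∑ j, s j) + (w i i * theta (s i - g) + ∑ j ∈ Finset.univ.erase i, w i j) := by
    intro s hs
    unfold util
    have hrow : ∀ j, Function.update (fun k j => if k = j then (g:ℝ) else 0) i s i j = s j := by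
      intro j; simp [Function.update]
    congr 1
    · congr 1; exact Finset.sum_congr rfl (fun j _ => hrow j)
    · rw [← Finset.add_sum_erase Finset.univ _ (Finset.mem_univ i)]
      congr 1
      · rw [hD s i]; simp
      · refine Finset.sum_congr rfl (fun j hj => ?_)
        have hji : j ≠ i := (Finset.mem_erase.1 hj).1
        rw [hD s j, if_neg hji]
        have h3 : s j + g - g = s j := by ring
        rw [h3, theta, if_pos (hs j), mul_one]
  rw [huti r hr0, huti _ (fun j => by by_cases h : j = i <;> simp [h, hg.le])]
  have hsum_star : (∑ j, (if j = i then g else (0:ℝ))) = g := by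
    simp [Finset.sum_ite_eq']
  rw [hsum_star]
  have hth_star : theta ((if i = i then g else 0) - g) = 1 := by
    simp [theta]
  rw [hth_star, mul_one]
  by_cases hri : r i = g
  · -- exists j ≠ i with r j ≠ 0
    have : ∃ j, j ≠ i ∧ r j ≠ 0 := by
      by_contra h
      push_neg at h
      apply hrne
      funext j
      by_cases hji : j = i
      · simp [hji, hri]
      · simp [hji, h j hji]
    obtain ⟨j0, hj0i, hj0⟩ := this
    have hcj : c₂ ≤ r j0 := (hCmin _ (hrC j0)).resolve_left hj0
    have hsum : g < ∑ j, r j := by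
      rw [← Finset.add_sum_erase Finset.univ _ (Finset.mem_univ i), hri]
      have : 0 < ∑ j ∈ Finset.univ.erase i, r j := by
        refine Finset.sum_pos' (fun j _ => hr0 j) ⟨j0, Finset.mem_erase.2 ⟨hj0i, Finset.mem_univ j0⟩, lt_of_lt_of_le hc₂ hcj⟩
      linarith
    have hth : theta (r i - g) ≤ 1 := by
      unfold theta; split <;> norm_num
    have hwpos : 0 < w i i := lt_trans hg (hwii i)
    nlinarith [hth, hwpos]
  · have hth : theta (r i - g) = 0 := by
      have : r i < g := lt_of_le_of_ne (hrg i) hri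
      unfold theta; rw [if_neg]; linarith
    rw [hth, mul_zero]
    have := hwii i
    have h0 : 0 ≤ ∑ j, r j := Finset.sum_nonneg (fun j _ => hr0 j)
    linarith
end

section
/- In an extreme even individual purpose game with c_1 = 0, c_K = g, any profile D in which some agent i contributes d_{ij} > 0 to some goal j ≠ i is not a Nash equilibrium. -/
open Finset

/-- In an extreme even individual purpose game, any profile in which some
agent `i` makes a positive contribution to some goal `j ≠ i` is not a Nash
equilibrium. -/
theorem foreign_contribution_not_nash {N : ℕ} (C : Set ℝ) (g c₂ : ℝ)
    (hg : 0 < g) (h0C : (0:ℝ) ∈ C) (hgC : g ∈ C) (hc₂ : 0 < c₂)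
    (hCrange : ∀ x ∈ C, 0 ≤ x ∧ x ≤ g)
    (hCmin : ∀ x ∈ C, x = 0 ∨ c₂ ≤ x)
    (w : Fin N → Fin N → ℝ)
    (hwii : ∀ i, g < w i i)
    (hwij : ∀ i j, i ≠ j → 0 ≤ w i j ∧ w i j < c₂)
    (D : Fin N → Fin N → ℝ)
    (i j : Fin N) (hij : j ≠ i) (hpos : 0 < D i j) :
    ¬ IsNash C w g D := by
  rintro ⟨hC, hNash⟩
  have htheta01 : ∀ x : ℝ, 0 ≤ theta x ∧ theta x ≤ 1 := by
    intro x; unfold theta; split <;> norm_num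
  set r : Fin N → ℝ := Function.update (D i) j 0 with hr
  have hrC : ∀ l, r l ∈ C := by
    intro l
    by_cases h : l = j
    · simp [hr, h, h0C]
    · simpa [hr, Function.update_of_ne h] using hC i l
  have hwj := hwij i j hij.symm
  have hd : c₂ ≤ D i j := by
    rcases hCmin _ (hC i j) with h | h
    · linarith
    · exact h
  have hre : ∀ l, r l = D i l - (if l = j then D i j else 0) := by
    intro l; by_cases h : l = j <;> simp [hr, h]
  have hsum_r : ∑ l, r l = (∑ l, D i l) - D i j := by
    simp [hre, Finset.sum_sub_distrib]
  have hD' : ∀ k l, Function.update D i r k l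
      = D k l - (if k = i ∧ l = j then D i j else 0) := by
    intro k l
    by_cases h : k = i
    · subst h
      simp only [Function.update_self]
      by_cases h' : l = j
      · subst h'; simp [hr]
      · simp [hre l, h']
    · simp [Function.update_of_ne h, h]
  have hcol : ∀ l, (∑ k, Function.update D i r k l)
      = (∑ k, D k l) - (if l = j then D i j else 0) := by
    intro l
    by_cases h : l = j
    · simp only [hD', h, and_true, Finset.sum_sub_distrib, Finset.sum_ite_eq']
      simp
    · simp [hD', h]
  have key : ∀ l, w i l * theta ((∑ k, D k l) - g) - (if l = j then w i j else 0)
      ≤ w i l * theta ((∑ k, Function.update D i r k l) - g) := by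
    intro l
    by_cases h : l = j
    · subst h
      have h1 := htheta01 ((∑ k, D k l) - g)
      have h2 := htheta01 ((∑ k, Function.update D i r k l) - g)
      have hw0 := hwj.1
      simp only [eq_self_iff_true, if_true]
      nlinarith [h1.1, h1.2, h2.1, h2.2]
    · rw [hcol l, if_neg h, if_neg h]
      simp
  have hsum_key : (∑ l, w i l * theta ((∑ k, D k l) - g)) - w i j
      ≤ ∑ l, w i l * theta ((∑ k, Function.update D i r k l) - g) := by
    have := Finset.sum_le_sum (fun l (_ : l ∈ Finset.univ) => key l)
    simpa [Finset.sum_sub_distrib] using this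
  have hle := hNash i r hrC
  have : util w (fun _ => g) D i < util w (fun _ => g) (Function.update D i r) i := by
    unfold util
    rw [Function.update_self, hsum_r]
    have : w i j < D i j := lt_of_lt_of_le hwj.2 hd
    linarith [hsum_key]
  linarith
end
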